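/- arXiv:1711.06447 — 2 statements merged into one kernel-verified Lean document; each statement's English description precedes it below -/
import Mathlib

section
/- For any nonzero vectors u, v in ℝ^d, the absolute difference of their log-norms satisfies |log |u| - log |v|| ≤ |u - v|^{1/2} · (|u|^{-1/2} + |v|^{-1/2}). -/
/-!
Write `a = ‖u‖` and `b = ‖v‖`. The geometric mean `√(ab)` is at most the logarithmic mean
`(a - b) / (log a - log b)`, which after the substitution `a = s²`, `b = t²` is the calculus fact
`2 log x ≤ x - x⁻¹` for `x = s / t ≥ 1`. Hence `|log a - log b| ≤ |a - b| / √(ab)`; splitting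
`|a - b| = √|a - b| · √|a - b|` and bounding one factor by `√a + √b` gives
`√|a - b| (a^{-1/2} + b^{-1/2})`, and `|a - b| ≤ ‖u - v‖` finishes the proof.
-/

open Real

namespace Real

lemma two_mul_log_le_sub_inv {x : ℝ} (hx : 1 ≤ x) : 2 * log x ≤ x - x⁻¹ := by
  have hderiv : ∀ y ∈ Set.Ioi (0 : ℝ),
      HasDerivAt (fun y ↦ y - y⁻¹ - 2 * log y) ((1 - y⁻¹) ^ 2) y := by
    intro y hy
    refine (((hasDerivAt_id' y).sub (hasDerivAt_inv hy.ne')).sub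
      ((hasDerivAt_log hy.ne').const_mul 2)).congr_deriv ?_
    field_simp
    ring
  have hmono : MonotoneOn (fun y ↦ y - y⁻¹ - 2 * log y) (Set.Ioi 0) :=
    monotoneOn_of_hasDerivWithinAt_nonneg (convex_Ioi 0)
      (fun y hy ↦ (hderiv y hy).continuousAt.continuousWithinAt)
      (fun y hy ↦ (hderiv y (interior_subset hy)).hasDerivWithinAt)
      (fun y _ ↦ sq_nonneg _)
  have := hmono (Set.mem_Ioi.2 one_pos) (Set.mem_Ioi.2 (by linarith)) hx
  simp only [inv_one, sub_self, log_one, mul_zero] at this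
  linarith

lemma abs_log_sub_log_le_abs_sub_div_sqrt_mul {a b : ℝ} (ha : 0 < a) (hb : 0 < b) :
    |log a - log b| ≤ |a - b| / √(a * b) := by
  wlog hba : b ≤ a generalizing a b
  · rw [abs_sub_comm, abs_sub_comm a, mul_comm]
    exact this hb ha (le_of_not_ge hba)
  obtain ⟨s, hs, rfl⟩ : ∃ s, 0 < s ∧ s ^ 2 = a := ⟨√a, sqrt_pos.2 ha, sq_sqrt ha.le⟩
  obtain ⟨t, ht, rfl⟩ : ∃ t, 0 < t ∧ t ^ 2 = b := ⟨√b, sqrt_pos.2 hb, sq_sqrt hb.le⟩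
  have hts : t ≤ s := (pow_le_pow_iff_left₀ ht.le hs.le two_ne_zero).1 hba
  have key := two_mul_log_le_sub_inv ((one_le_div ht).2 hts)
  rw [log_div hs.ne' ht.ne'] at key
  rw [abs_of_nonneg (sub_nonneg.2 (log_le_log (by positivity) hba)),
    abs_of_nonneg (sub_nonneg.2 hba), ← mul_pow, sqrt_sq (by positivity), log_pow, log_pow]
  calc (2 : ℕ) * log s - (2 : ℕ) * log t = 2 * (log s - log t) := by push_cast; ring
    _ ≤ s / t - (s / t)⁻¹ := key
    _ = (s ^ 2 - t ^ 2) / (s * t) := by field_simp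

lemma sqrt_abs_sub_le_sqrt_add_sqrt {a b : ℝ} (ha : 0 ≤ a) (hb : 0 ≤ b) :
    √|a - b| ≤ √a + √b := by
  rw [sqrt_le_iff]
  refine ⟨by positivity, ?_⟩
  rw [add_sq, sq_sqrt ha, sq_sqrt hb]
  have : 0 ≤ 2 * √a * √b := by positivity
  rw [abs_le]
  constructor <;> linarith

lemma abs_log_sub_log_le_sqrt_abs_sub_mul {a b : ℝ} (ha : 0 < a) (hb : 0 < b) :
    |log a - log b| ≤ √|a - b| * ((√a)⁻¹ + (√b)⁻¹) := by
  have hsa := sqrt_pos.2 ha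
  have hsb := sqrt_pos.2 hb
  calc |log a - log b| ≤ |a - b| / √(a * b) := abs_log_sub_log_le_abs_sub_div_sqrt_mul ha hb
    _ = √|a - b| * (√|a - b| / (√a * √b)) := by
      rw [sqrt_mul ha.le, ← mul_div_assoc, mul_self_sqrt (abs_nonneg _)]
    _ ≤ √|a - b| * ((√a + √b) / (√a * √b)) := by
      gcongr
      exact sqrt_abs_sub_le_sqrt_add_sqrt ha.le hb.le
    _ = √|a - b| * ((√a)⁻¹ + (√b)⁻¹) := by
      field_simp
      ring

end Real

theorem log_norm_diff_le (d : ℕ) (u v : EuclideanSpace ℝ (Fin d)) (hu : u ≠ 0) (hv : v ≠ 0) :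
    |Real.log ‖u‖ - Real.log ‖v‖| ≤
      ‖u - v‖ ^ ((1 : ℝ) / 2) * (‖u‖ ^ (-(1 : ℝ) / 2) + ‖v‖ ^ (-(1 : ℝ) / 2)) := by
  have rpow_neg_half : ∀ x : ℝ, 0 ≤ x → x ^ (-(1 : ℝ) / 2) = (√x)⁻¹ := fun x hx ↦ by
    rw [neg_div, rpow_neg hx, ← sqrt_eq_rpow]
  rw [← sqrt_eq_rpow, rpow_neg_half _ (norm_nonneg u), rpow_neg_half _ (norm_nonneg v)]
  calc |log ‖u‖ - log ‖v‖| ≤ √|‖u‖ - ‖v‖| * ((√‖u‖)⁻¹ + (√‖v‖)⁻¹) :=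
        abs_log_sub_log_le_sqrt_abs_sub_mul (norm_pos_iff.2 hu) (norm_pos_iff.2 hv)
    _ ≤ √‖u - v‖ * ((√‖u‖)⁻¹ + (√‖v‖)⁻¹) := by
      gcongr
      exact abs_norm_sub_norm_le u v
end

section
/- Let d ≥ 1 and 0 < α < d. There exists a constant C = C(α, d) > 0 such that for every nonzero x ∈ ℝ^d and every t > 0, ∫_{ℝ^d} p_t(y) |y - x|^{-α} dy ≤ C |x|^{-α}, where p_t(y) = (2πt)^{-d/2} exp(-|y|²/(2t)) is the Gaussian heat kernel. -/
open MeasureTheory Real Filter Topology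

noncomputable def heatKernel (d : ℕ) (t : ℝ) (y : EuclideanSpace ℝ (Fin d)) : ℝ :=
  (2 * Real.pi * t) ^ (-(d : ℝ) / 2) * Real.exp (-‖y‖ ^ 2 / (2 * t))

/-!
Split the integral at the ball `B` of radius `‖x‖ / 2` around `x`. Off `B` the singular factor is
at most `2 ^ α * ‖x‖ ^ (-α)` and the heat kernel has total mass one. On `B` we have
`‖y‖ ≥ ‖x‖ / 2`, and the heat kernel obeys the bound `p_t(y) ≤ K_d * ‖y‖ ^ (-d)` uniformly in `t`
(because `u ^ (d/2) * exp (-u)` is bounded), while `∫_B ‖y - x‖ ^ (-α)` is finite for `α < d`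
and scales like `‖x‖ ^ (d - α)`.
-/

open Set Metric Module

theorem Real.rpow_mul_exp_neg_le {q u : ℝ} (hq : 0 ≤ q) (hu : 0 ≤ u) :
    u ^ q * exp (-u) ≤ q ^ q := by
  rcases hq.eq_or_lt with rfl | hq
  · simpa using neg_nonpos.2 hu
  rcases hu.eq_or_lt with rfl | hu
  · rw [zero_rpow hq.ne', zero_mul]; positivity
  have hlog : log u - log q ≤ u / q - 1 := by
    rw [← log_div hu.ne' hq.ne']; exact log_le_sub_one_of_pos (by positivity)
  have h := mul_le_mul_of_nonneg_left hlog hq.le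
  rw [mul_sub, mul_sub, mul_div_cancel₀ _ hq.ne', mul_one] at h
  rw [rpow_def_of_pos hu, rpow_def_of_pos hq, ← exp_add, exp_le_exp]
  linarith

theorem half_norm_le_norm_add {E : Type*} [SeminormedAddCommGroup E] {x z : E}
    (hz : ‖z‖ < ‖x‖ / 2) : ‖x‖ / 2 ≤ ‖z + x‖ :=
  calc ‖x‖ / 2 ≤ ‖x‖ - ‖z‖ := by linarith
    _ ≤ ‖z + x‖ := by simpa [add_comm] using norm_sub_norm_le x (-z)

section RieszPotential

variable {E : Type*} [NormedAddCommGroup E] [NormedSpace ℝ E] [FiniteDimensional ℝ E]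
  [MeasurableSpace E] [BorelSpace E] (μ : Measure E) [μ.IsAddHaarMeasure]

theorem setIntegral_ball_norm_rpow (s : ℝ) {ρ : ℝ} (hρ : 0 < ρ) :
    ∫ z in ball (0 : E) ρ, ‖z‖ ^ s ∂μ =
      ρ ^ (finrank ℝ E + s) * ∫ z in ball (0 : E) 1, ‖z‖ ^ s ∂μ := by
  have h := Measure.setIntegral_comp_smul_of_pos μ (fun z : E => ‖z‖ ^ s) (ball 0 1) hρ
  have h_smul (z : E) : ‖ρ • z‖ ^ s = ρ ^ s * ‖z‖ ^ s := by
    rw [norm_smul, Real.norm_of_nonneg hρ.le, mul_rpow hρ.le (norm_nonneg z)]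
  simp only [h_smul, integral_const_mul, smul_eq_mul, smul_unitBall_of_pos hρ] at h
  rw [rpow_add hρ, rpow_natCast, mul_assoc, h, ← mul_assoc,
    mul_inv_cancel₀ (by positivity), one_mul]

theorem integrableOn_ball_norm_rpow_neg (hd : 1 ≤ finrank ℝ E) {α : ℝ} (hα : α < finrank ℝ E)
    (ρ : ℝ) : IntegrableOn (fun z : E => ‖z‖ ^ (-α)) (ball 0 ρ) μ :=
  integrableOn_ball_of_norm_le_rpow (C := 1) hd hα
    (.of_forall fun z => by rw [one_mul, Real.norm_of_nonneg (by positivity)])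
    (by fun_prop : Measurable fun z : E => ‖z‖ ^ (-α)).aestronglyMeasurable

theorem integral_mul_norm_sub_rpow_neg_le (hd : 1 ≤ finrank ℝ E) {α : ℝ} (hα0 : 0 ≤ α)
    (hαd : α < finrank ℝ E) {p : E → ℝ} (hp0 : ∀ y, 0 ≤ p y) (hp : Integrable p μ) {K : ℝ}
    (hpK : ∀ y, y ≠ 0 → p y ≤ K * ‖y‖ ^ (-(finrank ℝ E : ℝ))) {x : E} (hx : x ≠ 0) :
    ∫ y, p y * ‖y - x‖ ^ (-α) ∂μ ≤
      ((∫ y, p y ∂μ) + K * ∫ z in ball (0 : E) 1, ‖z‖ ^ (-α) ∂μ) * (‖x‖ / 2) ^ (-α) := by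
  set n : ℝ := (finrank ℝ E : ℝ)
  set ρ := ‖x‖ / 2
  have hx' : 0 < ‖x‖ := norm_pos_iff.2 hx
  have hρ : 0 < ρ := by positivity
  have hK : 0 ≤ K := nonneg_of_mul_nonneg_left ((hp0 x).trans (hpK x hx)) (by positivity)
  set g := fun z => p (z + x) * ρ ^ (-α) +
    K * ρ ^ (-n) * (ball (0 : E) ρ).indicator (fun z => ‖z‖ ^ (-α)) z
  have hp_shift : Integrable (fun z => p (z + x) * ρ ^ (-α)) μ :=
    (hp.comp_add_right x).mul_const _
  have h_sing : Integrable (fun z => K * ρ ^ (-n) *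
      (ball (0 : E) ρ).indicator (fun z => ‖z‖ ^ (-α)) z) μ :=
    ((integrable_indicator_iff measurableSet_ball).2
      (integrableOn_ball_norm_rpow_neg μ hd hαd ρ)).const_mul _
  have hg (z : E) : p (z + x) * ‖z‖ ^ (-α) ≤ g z := by
    by_cases hz : z ∈ ball 0 ρ
    · have hρz : ρ ≤ ‖z + x‖ := half_norm_le_norm_add (mem_ball_zero_iff.1 hz)
      have hp_near : p (z + x) ≤ K * ρ ^ (-n) :=
        (hpK _ (norm_pos_iff.1 (hρ.trans_le hρz))).trans
          (mul_le_mul_of_nonneg_left (rpow_le_rpow_of_nonpos hρ hρz (by simp [n])) hK)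
      simp only [g, indicator_of_mem hz]
      calc p (z + x) * ‖z‖ ^ (-α) ≤ K * ρ ^ (-n) * ‖z‖ ^ (-α) := by gcongr
        _ ≤ _ := le_add_of_nonneg_left (mul_nonneg (hp0 _) (by positivity))
    · have hρz : ρ ≤ ‖z‖ := by simpa using hz
      simp only [g, indicator_of_notMem hz, mul_zero, add_zero]
      exact mul_le_mul_of_nonneg_left (rpow_le_rpow_of_nonpos hρ hρz (neg_nonpos.2 hα0)) (hp0 _)
  calc ∫ y, p y * ‖y - x‖ ^ (-α) ∂μ = ∫ z, p (z + x) * ‖z‖ ^ (-α) ∂μ := by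
        simpa using (integral_add_right_eq_self (fun y => p y * ‖y - x‖ ^ (-α)) x).symm
    _ ≤ ∫ z, g z ∂μ := integral_mono_of_nonneg
        (.of_forall fun z => mul_nonneg (hp0 _) (by positivity)) (hp_shift.add h_sing)
        (.of_forall hg)
    _ = (∫ y, p y ∂μ) * ρ ^ (-α) +
        K * ρ ^ (-n) * (ρ ^ (n + -α) * ∫ z in ball (0 : E) 1, ‖z‖ ^ (-α) ∂μ) := by
      rw [integral_add hp_shift h_sing, integral_mul_const,
        integral_add_right_eq_self, integral_const_mul, integral_indicator measurableSet_ball,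
        setIntegral_ball_norm_rpow μ _ hρ]
    _ = _ := by
      have : ρ ^ (-n) * ρ ^ (n + -α) = ρ ^ (-α) := by rw [← rpow_add hρ]; ring_nf
      linear_combination K * (∫ z in ball (0 : E) 1, ‖z‖ ^ (-α) ∂μ) * this

end RieszPotential

section HeatKernel

variable {d : ℕ} {t : ℝ}

theorem heatKernel_nonneg (ht : 0 ≤ t) (y : EuclideanSpace ℝ (Fin d)) : 0 ≤ heatKernel d t y := by
  unfold heatKernel; positivity

theorem integral_heatKernel (ht : 0 < t) : ∫ y, heatKernel d t y = 1 := by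
  have h2t : 0 < (2 * t)⁻¹ := by positivity
  have hexp (y : EuclideanSpace ℝ (Fin d)) : -‖y‖ ^ 2 / (2 * t) = -(2 * t)⁻¹ * ‖y‖ ^ 2 := by ring
  simp only [heatKernel, hexp, integral_const_mul, finrank_euclideanSpace_fin, div_inv_eq_mul,
    GaussianFourier.integral_rexp_neg_mul_sq_norm h2t]
  rw [neg_div, rpow_neg (by positivity), show π * (2 * t) = 2 * π * t by ring,
    inv_mul_cancel₀ (by positivity)]

theorem integrable_heatKernel (ht : 0 < t) : Integrable (heatKernel d t) :=
  .of_integral_ne_zero (by rw [integral_heatKernel ht]; exact one_ne_zero)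

theorem heatKernel_le_norm_rpow (ht : 0 < t) {y : EuclideanSpace ℝ (Fin d)} (hy : y ≠ 0) :
    heatKernel d t y ≤ (d / (2 * π)) ^ ((d : ℝ) / 2) * ‖y‖ ^ (-(d : ℝ)) := by
  set q : ℝ := d / 2
  set u := ‖y‖ ^ 2 / (2 * t)
  have hy' : 0 < ‖y‖ := norm_pos_iff.2 hy
  have hu : 0 < u := by positivity
  have hprefactor : (2 * π * t) ^ (-(d : ℝ) / 2) = (π * ‖y‖ ^ 2) ^ (-q) * u ^ q := by
    rw [show 2 * π * t = (π * ‖y‖ ^ 2) * u⁻¹ by simp only [u]; field_simp, neg_div,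
      mul_rpow (by positivity) (by positivity), inv_rpow hu.le, rpow_neg hu.le, inv_inv]
  have hconst : (π * ‖y‖ ^ 2) ^ (-q) * q ^ q = (d / (2 * π)) ^ q * ‖y‖ ^ (-(d : ℝ)) := by
    rw [mul_rpow (by positivity) (by positivity), ← rpow_natCast, ← rpow_mul hy'.le,
      show (d : ℝ) / (2 * π) = q / π by ring, div_rpow (by positivity) pi_pos.le,
      rpow_neg pi_pos.le, show ((2 : ℕ) : ℝ) * -q = -d by simp [q]; ring]
    ring
  calc heatKernel d t y = (π * ‖y‖ ^ 2) ^ (-q) * (u ^ q * exp (-u)) := by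
        rw [heatKernel, hprefactor, neg_div]; ring
    _ ≤ (π * ‖y‖ ^ 2) ^ (-q) * q ^ q := by
        gcongr; exact rpow_mul_exp_neg_le (by positivity) hu.le
    _ = _ := hconst

end HeatKernel

theorem heat_kernel_riesz_bound (d : ℕ) (hd : 1 ≤ d) (α : ℝ) (hα0 : 0 < α) (hαd : α < d) :
    ∃ C > 0, ∀ x : EuclideanSpace ℝ (Fin d), x ≠ 0 → ∀ t : ℝ, 0 < t →
      (∫ y, heatKernel d t y * ‖y - x‖ ^ (-α)) ≤ C * ‖x‖ ^ (-α) := by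
  set K := (d / (2 * π)) ^ ((d : ℝ) / 2)
  set J := ∫ z in ball (0 : EuclideanSpace ℝ (Fin d)) 1, ‖z‖ ^ (-α)
  refine ⟨2 ^ α * (1 + K * J), by positivity, fun x hx t ht => ?_⟩
  have h := integral_mul_norm_sub_rpow_neg_le volume (by rwa [finrank_euclideanSpace_fin])
    hα0.le (by rwa [finrank_euclideanSpace_fin]) (heatKernel_nonneg ht.le)
    (integrable_heatKernel ht) (fun y hy => by
      rw [finrank_euclideanSpace_fin]; exact heatKernel_le_norm_rpow ht hy) hx
  rw [integral_heatKernel ht, div_rpow (norm_nonneg x) zero_le_two, rpow_neg zero_le_two,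
    div_inv_eq_mul] at h
  exact h.trans_eq (by ring)
end
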